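/- arXiv:2010.13284 — 2 statements merged into one kernel-verified Lean document; each statement's English description precedes it below -/
import Mathlib

section
/- Let g be the 3-dimensional complex Lie algebra with basis e_1, e_2, e_3 and Lie bracket determined by [e_1,e_2] = e_2, [e_1,e_3] = e_3, [e_2,e_3] = 0. Then ind g = 1, but g is not contact: there is no φ ∈ g* with φ ∧ dφ ≠ 0. -/
open scoped TensorProduct

noncomputable section

namespace ContactSeaweeds

/-! ### Index of a Lie algebra -/

/-- The kernel of the Kirillov form `B_φ(x, y) = φ ⁅x, y⁆` associated to a one-form `φ`. -/
def kirillovKernel {L : Type*} [LieRing L] [LieAlgebra ℂ L] (φ : Module.Dual ℂ L) :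
    Submodule ℂ L where
  carrier := {x | ∀ y, φ ⁅x, y⁆ = 0}
  add_mem' := by
    intro x y hx hy z
    simp [add_lie, hx z, hy z]
  zero_mem' := by intro y; simp
  smul_mem' := by
    intro c x hx y
    simp [smul_lie, hx y]

/-- The index of a complex Lie algebra:
`ind L = min_{φ ∈ L*} dim {x ∈ L | φ ⁅x, y⁆ = 0 for all y ∈ L}`. -/
def lieIndex (L : Type*) [LieRing L] [LieAlgebra ℂ L] : ℕ :=
  sInf {d : ℕ | ∃ φ : Module.Dual ℂ L, d = Module.finrank ℂ (kirillovKernel φ)}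

/-! ### Contact structures -/

/-- Wedge product of complex-valued alternating forms. -/
def wedge {L : Type*} [AddCommGroup L] [Module ℂ L] {p q : ℕ}
    (α : L [⋀^Fin p]→ₗ[ℂ] ℂ) (β : L [⋀^Fin q]→ₗ[ℂ] ℂ) : L [⋀^Fin (p + q)]→ₗ[ℂ] ℂ :=
  ((TensorProduct.lid ℂ ℂ).toLinearMap.compAlternatingMap (α.domCoprod β)).domDomCongr
    finSumFinEquiv

/-- `k`-th wedge power of a two-form. -/
def wedgePow {L : Type*} [AddCommGroup L] [Module ℂ L] (β : L [⋀^Fin 2]→ₗ[ℂ] ℂ) :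
    (k : ℕ) → L [⋀^Fin (2 * k)]→ₗ[ℂ] ℂ
  | 0 => (AlternatingMap.constOfIsEmpty ℂ L (Fin 0) 1).domDomCongr (finCongr (by ring))
  | k + 1 => (wedge β (wedgePow β k)).domDomCongr (finCongr (by ring))

/-- The alternating two-form `dφ (x, y) = -φ ⁅x, y⁆`. -/
def dForm {L : Type*} [LieRing L] [LieAlgebra ℂ L] (φ : Module.Dual ℂ L) :
    L [⋀^Fin 2]→ₗ[ℂ] ℂ where
  toFun v := -φ ⁅v 0, v 1⁆
  map_update_add' := by
    intro _ v i x y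
    fin_cases i <;>
      simp [Function.update_apply, Fin.ext_iff, add_lie, lie_add] <;> ring
  map_update_smul' := by
    intro _ v i c x
    fin_cases i <;>
      simp [Function.update_apply, Fin.ext_iff, smul_lie, lie_smul]
  map_eq_zero_of_eq' := by
    intro v i j hv hij
    have : i = 0 ∧ j = 1 ∨ i = 1 ∧ j = 0 := by omega
    rcases this with ⟨hi, hj⟩ | ⟨hi, hj⟩ <;> subst hi <;> subst hj <;>
      · show -φ ⁅v 0, v 1⁆ = 0
        rw [hv]
        simp

/-- The `(1 + 2n)`-form `φ ∧ (dφ)^n`. -/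
def contactCandidate {L : Type*} [LieRing L] [LieAlgebra ℂ L] (n : ℕ)
    (φ : Module.Dual ℂ L) : L [⋀^Fin (1 + 2 * n)]→ₗ[ℂ] ℂ :=
  wedge (AlternatingMap.ofSubsingleton ℂ L ℂ (0 : Fin 1) φ) (wedgePow (dForm φ) n)

/-- `φ` is a contact form: `φ ∧ (dφ)^n ≠ 0` (for a Lie algebra of dimension `2n + 1`). -/
def IsContactForm {L : Type*} [LieRing L] [LieAlgebra ℂ L] (n : ℕ)
    (φ : Module.Dual ℂ L) : Prop :=
  contactCandidate n φ ≠ 0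

/-- A complex Lie algebra is contact if it has (odd) dimension `2n + 1` and admits a one-form
`φ` with `φ ∧ (dφ)^n ≠ 0`. -/
def IsContact (L : Type*) [LieRing L] [LieAlgebra ℂ L] : Prop :=
  ∃ n : ℕ, Module.finrank ℂ L = 2 * n + 1 ∧ ∃ φ : Module.Dual ℂ L, IsContactForm n φ

/-! ### Seaweed algebras -/

/-- `c` is a composition of `n`: a list of positive integers summing to `n`. -/
def IsComposition (n : ℕ) (c : List ℕ) : Prop :=
  (∀ x ∈ c, 0 < x) ∧ c.sum = n

/-- `i` and `j` (0-based) lie in the same block of the composition `c`. -/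
def SameBlock (c : List ℕ) (i j : ℕ) : Prop :=
  ∃ k : ℕ, (c.take k).sum ≤ i ∧ i < (c.take (k + 1)).sum ∧
    (c.take k).sum ≤ j ∧ j < (c.take (k + 1)).sum

/-- The `(i, j)` location (0-based) is admissible for the seaweed determined by the
compositions `a` (lower-triangular blocks) and `b` (upper-triangular blocks). -/
def Admissible (a b : List ℕ) (i j : ℕ) : Prop :=
  (j ≤ i ∧ SameBlock a i j) ∨ (i ≤ j ∧ SameBlock b i j)

lemma take_sum_mono (c : List ℕ) {m m' : ℕ} (h : m ≤ m') :
    (c.take m).sum ≤ (c.take m').sum := by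
  obtain ⟨d, rfl⟩ := Nat.exists_eq_add_of_le h
  rw [List.take_add, List.sum_append]
  omega

lemma sameBlock_symm {c : List ℕ} {i j : ℕ} (h : SameBlock c i j) : SameBlock c j i := by
  obtain ⟨k, h1, h2, h3, h4⟩ := h
  exact ⟨k, h3, h4, h1, h2⟩

lemma sameBlock_trans {c : List ℕ} {i j k : ℕ} (h1 : SameBlock c i k) (h2 : SameBlock c k j) :
    SameBlock c i j := by
  obtain ⟨k1, a1, a2, a3, a4⟩ := h1
  obtain ⟨k2, b1, b2, b3, b4⟩ := h2
  have hk : k1 = k2 := by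
    rcases Nat.lt_trichotomy k1 k2 with h | h | h
    · have := take_sum_mono c (show k1 + 1 ≤ k2 from h)
      omega
    · exact h
    · have := take_sum_mono c (show k2 + 1 ≤ k1 from h)
      omega
  subst hk
  exact ⟨k1, a1, a2, b3, b4⟩

lemma sameBlock_between {c : List ℕ} {i j z : ℕ} (h : SameBlock c i j)
    (h1 : i ≤ z ∨ j ≤ z) (h2 : z ≤ i ∨ z ≤ j) : SameBlock c i z := by
  obtain ⟨k, a1, a2, a3, a4⟩ := h
  exact ⟨k, a1, a2, by omega, by omega⟩

lemma admissible_trans {a b : List ℕ} {i j k : ℕ} (h1 : Admissible a b i k)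
    (h2 : Admissible a b k j) : Admissible a b i j := by
  rcases h1 with ⟨hik, hsb1⟩ | ⟨hik, hsb1⟩ <;> rcases h2 with ⟨hkj, hsb2⟩ | ⟨hkj, hsb2⟩
  · exact Or.inl ⟨le_trans hkj hik, sameBlock_trans hsb1 hsb2⟩
  · rcases le_or_gt j i with hji | hij
    · exact Or.inl ⟨hji, sameBlock_between hsb1 (by omega) (by omega)⟩
    · exact Or.inr ⟨le_of_lt hij, sameBlock_trans
        (sameBlock_symm (sameBlock_between hsb2 (by omega) (by omega))) hsb2⟩
  · rcases le_or_gt j i with hji | hij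
    · exact Or.inl ⟨hji, sameBlock_trans
        (sameBlock_symm (sameBlock_between hsb2 (by omega) (by omega))) hsb2⟩
    · exact Or.inr ⟨le_of_lt hij, sameBlock_between hsb1 (by omega) (by omega)⟩
  · exact Or.inr ⟨le_trans hik hkj, sameBlock_trans hsb1 hsb2⟩

attribute [local instance 100] LieRing.ofAssociativeRing

/-- The type-A seaweed `pₙᴬ(a₁|⋯|aₘ \ b₁|⋯|b_t)`: the Lie algebra of traceless `n × n`
complex matrices supported on admissible locations. -/
def seaweed (n : ℕ) (a b : List ℕ) : LieSubalgebra ℂ (Matrix (Fin n) (Fin n) ℂ) where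
  carrier := {M | Matrix.trace M = 0 ∧
    ∀ i j : Fin n, ¬ Admissible a b i.val j.val → M i j = 0}
  add_mem' := by
    rintro M N ⟨hM1, hM2⟩ ⟨hN1, hN2⟩
    refine ⟨by simp [Matrix.trace_add, hM1, hN1], fun i j h => ?_⟩
    simp [Matrix.add_apply, hM2 i j h, hN2 i j h]
  zero_mem' := by simp
  smul_mem' := by
    rintro c M ⟨hM1, hM2⟩
    refine ⟨by simp [Matrix.trace_smul, hM1], fun i j h => ?_⟩
    simp [Matrix.smul_apply, hM2 i j h]
  lie_mem' := by
    rintro M N ⟨hM1, hM2⟩ ⟨hN1, hN2⟩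
    rw [Ring.lie_def]
    constructor
    · rw [Matrix.trace_sub, Matrix.trace_mul_comm, sub_self]
    · intro i j h
      rw [Matrix.sub_apply, Matrix.mul_apply, Matrix.mul_apply]
      have hz : ∀ k : Fin n, M i k * N k j = 0 ∧ N i k * M k j = 0 := by
        intro k
        constructor
        · by_cases hik : Admissible a b i.val k.val
          · rw [hN2 k j (fun hkj => h (admissible_trans hik hkj)), mul_zero]
          · rw [hM2 i k hik, zero_mul]
        · by_cases hik : Admissible a b i.val k.val
          · rw [hM2 k j (fun hkj => h (admissible_trans hik hkj)), mul_zero]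
          · rw [hN2 i k hik, zero_mul]
      rw [Finset.sum_congr rfl (fun k _ => (hz k).1), Finset.sum_congr rfl (fun k _ => (hz k).2)]
      simp

/-! ### Meanders -/

/-- `{i, j}` (0-based, with `i < j`) is a top edge of the meander of the composition `a`. -/
def TopEdge (a : List ℕ) (i j : ℕ) : Prop :=
  ∃ k r : ℕ, 2 * r + 1 < a.getD k 0 ∧
    i = (a.take k).sum + r ∧ j = (a.take k).sum + (a.getD k 0 - 1 - r)

/-- `{i, j}` (0-based, with `i < j`) is a bottom edge of the meander of the composition `b`. -/
def BottomEdge (b : List ℕ) (i j : ℕ) : Prop :=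
  ∃ k r : ℕ, 2 * r + 1 < b.getD k 0 ∧
    i = (b.take k).sum + r ∧ j = (b.take k).sum + (b.getD k 0 - 1 - r)

/-- The meander of the seaweed with compositions `a` and `b`, as a graph on the `n` vertices:
two vertices are adjacent when they are joined by a top edge or a bottom edge. -/
def meander (n : ℕ) (a b : List ℕ) : SimpleGraph (Fin n) where
  Adj i j := i ≠ j ∧ (TopEdge a i.val j.val ∨ TopEdge a j.val i.val ∨
    BottomEdge b i.val j.val ∨ BottomEdge b j.val i.val)
  symm := ⟨by
    rintro i j ⟨h1, h2⟩
    exact ⟨h1.symm, by tauto⟩⟩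
  loopless := ⟨fun i h => h.1 rfl⟩

/-- The vertex `v` (0-based) lies on exactly one top edge of the meander. -/
def OneTop (a : List ℕ) (v : ℕ) : Prop :=
  ∃! w : ℕ, TopEdge a v w ∨ TopEdge a w v

/-- The vertex `v` (0-based) lies on exactly one bottom edge of the meander. -/
def OneBottom (b : List ℕ) (v : ℕ) : Prop :=
  ∃! w : ℕ, BottomEdge b v w ∨ BottomEdge b w v

/-- A connected component of the meander is a cycle: each of its vertices lies on exactly one
top edge and exactly one bottom edge. -/
def IsCycleComp {n : ℕ} {a b : List ℕ} (c : (meander n a b).ConnectedComponent) : Prop :=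
  ∀ v : Fin n, (meander n a b).connectedComponentMk v = c → OneTop a v.val ∧ OneBottom b v.val

/-- A connected component of the meander is a path (possibly a single vertex): it has a vertex
missing a top edge or a bottom edge. -/
def IsPathComp {n : ℕ} {a b : List ℕ} (c : (meander n a b).ConnectedComponent) : Prop :=
  ∃ v : Fin n, (meander n a b).connectedComponentMk v = c ∧
    ¬ (OneTop a v.val ∧ OneBottom b v.val)

/-! ### Distinguished linear functionals on matrices -/

/-- The linear functional `M ↦ M i j` on matrices. -/
def entryForm {n : ℕ} (i j : Fin n) : Matrix (Fin n) (Fin n) ℂ →ₗ[ℂ] ℂ :=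
  (Matrix.traceLinearMap (Fin n) ℂ ℂ).comp (LinearMap.mulLeft ℂ (Matrix.single j i 1))

open scoped Classical in
/-- The one-form `F̄` read off the meander: the sum, over top edges `{v_i, v_j}` with `i < j`,
of `M ↦ M j i`, plus the sum, over bottom edges `{v_i, v_j}` with `i < j`, of `M ↦ M i j`. -/
def meanderForm (n : ℕ) (a b : List ℕ) : Matrix (Fin n) (Fin n) ℂ →ₗ[ℂ] ℂ :=
  ∑ i : Fin n, ∑ j : Fin n,
    ((if TopEdge a i.val j.val then entryForm j i else 0) +
      (if BottomEdge b i.val j.val then entryForm i j else 0))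

open scoped Classical in
/-- The linear functional `M ↦ M₁₁ + ⋯ + M_{i,i}` (1-based indexing), i.e. the sum of the
first `i` diagonal entries. -/
def partialTraceForm (n i : ℕ) : Matrix (Fin n) (Fin n) ℂ →ₗ[ℂ] ℂ :=
  (Matrix.traceLinearMap (Fin n) ℂ ℂ).comp
    (LinearMap.mulLeft ℂ (Matrix.diagonal fun l : Fin n => if l.val < i then (1 : ℂ) else 0))

/-- The generating set `{e_{i,1} : 2 ≤ i ≤ a} ∪ {e_{a,j} : 2 ≤ j ≤ a-1}` (1-based indexing) of
a Heisenberg subalgebra of `n × n` matrices. -/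
def heisSet (n a : ℕ) : Set (Matrix (Fin n) (Fin n) ℂ) :=
  {M | ∃ i j : Fin n, M = Matrix.single i j 1 ∧
    ((j.val = 0 ∧ 1 ≤ i.val ∧ i.val ≤ a - 1) ∨
      (i.val = a - 1 ∧ 1 ≤ j.val ∧ j.val ≤ a - 2))}

/-! In the basis `e₁, e₂, e₃` the bracket is `⁅x, y⁆ = f x • y - f y • x` with `f = e₁*`, so
`φ ⁅x, y⁆ = (f ∧ φ) (x, y)`. The Kirillov kernel of `φ` therefore contains `ker f ⊓ ker φ`, with
equality when `f` and `φ` are linearly independent, and the index is `3 - 2 = 1`. Likewise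
`dφ = -(f ∧ φ)`, so `φ ∧ dφ = -(φ ∧ f ∧ φ) = 0`. -/

open Equiv Module

section Wedge

variable {L : Type*} [AddCommGroup L] [Module ℂ L]

theorem wedge_apply_mul_factorial {p q : ℕ} (α : L [⋀^Fin p]→ₗ[ℂ] ℂ) (β : L [⋀^Fin q]→ₗ[ℂ] ℂ)
    (v : Fin (p + q) → L) :
    (p.factorial * q.factorial : ℂ) * wedge α β v =
      ∑ σ : Perm (Fin p ⊕ Fin q), (Perm.sign σ : ℤ) •
        (α (fun i => v (finSumFinEquiv (σ (.inl i)))) *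
          β (fun i => v (finSumFinEquiv (σ (.inr i))))) := by
  have key := congrArg (fun F : L [⋀^Fin p ⊕ Fin q]→ₗ[ℂ] (ℂ ⊗[ℂ] ℂ) =>
      TensorProduct.lid ℂ ℂ (F fun i => v (finSumFinEquiv i)))
    (MultilinearMap.domCoprod_alternization_eq α β)
  simp only [MultilinearMap.alternatization_apply, MultilinearMap.domDomCongr_apply,
    MultilinearMap.domCoprod_apply, AlternatingMap.coe_multilinearMap, Units.smul_def,
    map_sum, map_zsmul, AlternatingMap.smul_apply, TensorProduct.lid_tmul,
    smul_eq_mul, Fintype.card_fin, map_nsmul] at key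
  rw [key, nsmul_eq_mul]
  push_cast
  rfl

theorem coe_wedgePow_one (β : L [⋀^Fin 2]→ₗ[ℂ] ℂ) : ⇑(wedgePow β 1) = β := by
  ext v
  let w : Fin (2 + 0) → L := v
  have key := wedge_apply_mul_factorial β (AlternatingMap.constOfIsEmpty ℂ L (Fin 0) 1) w
  rw [show (Finset.univ : Finset (Perm (Fin 2 ⊕ Fin 0))) = {1, swap (.inl 0) (.inl 1)} by decide,
    Finset.sum_pair (by decide)] at key
  have h1 : (fun i : Fin 2 => w (finSumFinEquiv (.inl i))) = v :=
    funext fun i => by fin_cases i <;> rfl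
  have h2 : (fun i : Fin 2 => w (finSumFinEquiv (swap (.inl 0) (.inl 1) (.inl i)))) =
      v ∘ swap 0 1 :=
    funext fun i => by fin_cases i <;> rfl
  simp only [Perm.one_apply, h1, h2, β.map_swap v (show (0 : Fin 2) ≠ 1 by decide),
    Perm.sign_one, Perm.sign_swap (show (.inl 0 : Fin 2 ⊕ Fin 0) ≠ .inl 1 by decide),
    AlternatingMap.constOfIsEmpty_apply, Function.const_apply] at key
  norm_num [Nat.factorial] at key
  change wedge β (AlternatingMap.constOfIsEmpty ℂ L (Fin 0) 1) w = β v
  linear_combination key / 2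

end Wedge

section Contact

variable {L : Type*} [LieRing L] [LieAlgebra ℂ L]

theorem dForm_apply (φ : Module.Dual ℂ L) (v : Fin 2 → L) : dForm φ v = -φ ⁅v 0, v 1⁆ := rfl

theorem contactCandidate_one_apply (φ : Module.Dual ℂ L) (v : Fin (1 + 2 * 1) → L) :
    contactCandidate 1 φ v =
      φ (v 1) * φ ⁅v 0, v 2⁆ - φ (v 0) * φ ⁅v 1, v 2⁆ - φ (v 2) * φ ⁅v 0, v 1⁆ := by
  let w : Fin (1 + 2) → L := v
  have key := wedge_apply_mul_factorial (AlternatingMap.ofSubsingleton ℂ L ℂ (0 : Fin 1) φ)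
    (wedgePow (dForm φ) 1) w
  rw [show (Finset.univ : Finset (Perm (Fin 1 ⊕ Fin 2))) =
    {1, swap (.inl 0) (.inr 0), swap (.inl 0) (.inr 1), swap (.inr 0) (.inr 1),
      swap (.inl 0) (.inr 0) * swap (.inr 0) (.inr 1),
      swap (.inl 0) (.inr 1) * swap (.inr 0) (.inr 1)} by decide, coe_wedgePow_one] at key
  simp +decide [Finset.sum_insert, swap_apply_of_ne_of_ne, dForm_apply, Nat.factorial] at key
  have h0 : w (finSumFinEquiv (.inl 0)) = v 0 := rfl
  have h1 : w (finSumFinEquiv (.inr 0)) = v 1 := rfl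
  have h2 : w (finSumFinEquiv (.inr 1)) = v 2 := rfl
  rw [h0, h1, h2, ← lie_skew (v 1) (v 0), ← lie_skew (v 2) (v 0), ← lie_skew (v 2) (v 1)] at key
  simp only [map_neg] at key
  change wedge _ _ w = _
  linear_combination key / 2

end Contact

theorem ker_inf_ker_eq_dualCoannihilator {K V : Type*} [Field K] [AddCommGroup V] [Module K V]
    (f g : Module.Dual K V) :
    LinearMap.ker f ⊓ LinearMap.ker g =
      (Submodule.span K (Set.range ![f, g])).dualCoannihilator := by
  refine SetLike.ext' ?_
  rw [Submodule.coe_dualCoannihilator_span]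
  ext x
  simp [and_comm]

theorem finrank_ker_inf_ker_add_finrank_span {K V : Type*} [Field K] [AddCommGroup V]
    [Module K V] [FiniteDimensional K V] (f g : Module.Dual K V) :
    finrank K ↥(LinearMap.ker f ⊓ LinearMap.ker g) +
        finrank K (Submodule.span K (Set.range ![f, g])) = finrank K V := by
  rw [ker_inf_ker_eq_dualCoannihilator, add_comm]
  exact Subspace.finrank_add_finrank_dualCoannihilator_eq _

theorem lieIndex_eq_of_forall_le {L : Type*} [LieRing L] [LieAlgebra ℂ L] {d : ℕ}
    (hle : ∀ φ : Module.Dual ℂ L, d ≤ finrank ℂ (kirillovKernel φ)) (φ₀ : Module.Dual ℂ L)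
    (h : finrank ℂ (kirillovKernel φ₀) = d) : lieIndex L = d :=
  le_antisymm (Nat.sInf_le ⟨φ₀, h.symm⟩) (le_csInf ⟨_, φ₀, rfl⟩ (by rintro _ ⟨φ, rfl⟩; exact hle φ))

theorem lie_eq_smul_sub_smul_of_basis {L : Type*} [LieRing L] [LieAlgebra ℂ L]
    (E : Module.Basis (Fin 3) ℂ L)
    (h12 : ⁅E 0, E 1⁆ = E 1) (h13 : ⁅E 0, E 2⁆ = E 2) (h23 : ⁅E 1, E 2⁆ = (0 : L)) (x y : L) :
    ⁅x, y⁆ = E.coord 0 x • y - E.coord 0 y • x := by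
  let bracketByForm : L →ₗ[ℂ] L →ₗ[ℂ] L :=
    LinearMap.mk₂ ℂ (fun x y => E.coord 0 x • y - E.coord 0 y • x)
      (by intros; simp only [map_add]; module) (by intros; simp only [map_smul, smul_eq_mul]; module)
      (by intros; simp only [map_add]; module) (by intros; simp only [map_smul, smul_eq_mul]; module)
  have h21 : ⁅E 1, E 0⁆ = -E 1 := by rw [← lie_skew, h12]
  have h31 : ⁅E 2, E 0⁆ = -E 2 := by rw [← lie_skew, h13]
  have h32 : ⁅E 2, E 1⁆ = (0 : L) := by rw [← lie_skew, h23, neg_zero]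
  have key : (LieModule.toEnd ℂ L L : L →ₗ[ℂ] Module.End ℂ L) = bracketByForm := by
    refine LinearMap.ext_basis E E fun i j => ?_
    fin_cases i <;> fin_cases j <;> simp [bracketByForm, h12, h13, h23, h21, h31, h32]
  exact congr($key x y)

section BracketByForm

variable {L : Type*} [LieRing L] [LieAlgebra ℂ L] {f : Module.Dual ℂ L}

theorem apply_lie_eq_mul_sub_mul (hbr : ∀ x y : L, ⁅x, y⁆ = f x • y - f y • x)
    (φ : Module.Dual ℂ L) (x y : L) : φ ⁅x, y⁆ = f x * φ y - f y * φ x := by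
  simp [hbr]

theorem ker_inf_ker_le_kirillovKernel (hbr : ∀ x y : L, ⁅x, y⁆ = f x • y - f y • x)
    (φ : Module.Dual ℂ L) : LinearMap.ker f ⊓ LinearMap.ker φ ≤ kirillovKernel φ := by
  rintro x ⟨hfx, hφx⟩ y
  rw [apply_lie_eq_mul_sub_mul hbr, LinearMap.mem_ker.mp hfx, LinearMap.mem_ker.mp hφx]
  ring

theorem kirillovKernel_eq_ker_inf_ker (hbr : ∀ x y : L, ⁅x, y⁆ = f x • y - f y • x)
    {φ : Module.Dual ℂ L} (hfφ : LinearIndependent ℂ ![f, φ]) :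
    kirillovKernel φ = LinearMap.ker f ⊓ LinearMap.ker φ := by
  refine le_antisymm (fun x hx => ?_) (ker_inf_ker_le_kirillovKernel hbr φ)
  have hcomb : (-φ x) • f + f x • φ = 0 := by
    ext y
    have hxy := hx y
    rw [apply_lie_eq_mul_sub_mul hbr] at hxy
    simp only [LinearMap.add_apply, LinearMap.smul_apply, smul_eq_mul, LinearMap.zero_apply]
    linear_combination hxy
  obtain ⟨hφx, hfx⟩ := LinearIndependent.pair_iff.mp hfφ _ _ hcomb
  exact ⟨hfx, neg_eq_zero.mp hφx⟩

theorem lieIndex_eq_finrank_sub_two [FiniteDimensional ℂ L]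
    (hbr : ∀ x y : L, ⁅x, y⁆ = f x • y - f y • x) {φ₀ : Module.Dual ℂ L}
    (hfφ₀ : LinearIndependent ℂ ![f, φ₀]) : lieIndex L = finrank ℂ L - 2 := by
  refine lieIndex_eq_of_forall_le (fun φ => ?_) φ₀ ?_
  · have hsum := finrank_ker_inf_ker_add_finrank_span f φ
    have hspan : finrank ℂ (Submodule.span ℂ (Set.range ![f, φ])) ≤ 2 :=
      finrank_range_le_card _
    have hle := Submodule.finrank_mono (ker_inf_ker_le_kirillovKernel hbr φ)
    omega
  · have hsum := finrank_ker_inf_ker_add_finrank_span f φ₀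
    rw [finrank_span_eq_card hfφ₀, Fintype.card_fin] at hsum
    rw [kirillovKernel_eq_ker_inf_ker hbr hfφ₀]
    omega

theorem contactCandidate_one_eq_zero (hbr : ∀ x y : L, ⁅x, y⁆ = f x • y - f y • x)
    (φ : Module.Dual ℂ L) : contactCandidate 1 φ = 0 := by
  ext v
  rw [contactCandidate_one_apply, AlternatingMap.zero_apply]
  simp only [apply_lie_eq_mul_sub_mul hbr]
  ring

end BracketByForm

/-- The 3-dimensional Lie algebra with `⁅e₁,e₂⁆ = e₂`, `⁅e₁,e₃⁆ = e₃`,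
`⁅e₂,e₃⁆ = 0` has index one but is not contact. -/
theorem index_one_not_contact_example (L : Type*) [LieRing L] [LieAlgebra ℂ L]
    (E : Module.Basis (Fin 3) ℂ L)
    (h12 : ⁅E 0, E 1⁆ = E 1) (h13 : ⁅E 0, E 2⁆ = E 2) (h23 : ⁅E 1, E 2⁆ = (0 : L)) :
    lieIndex L = 1 ∧ ∀ φ : Module.Dual ℂ L, ¬ IsContactForm 1 φ := by
  have hbr := lie_eq_smul_sub_smul_of_basis E h12 h13 h23
  have : FiniteDimensional ℂ L := E.finiteDimensional_of_finite
  have hindep : LinearIndependent ℂ ![E.coord 0, E.coord 1] :=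
    LinearIndependent.pair_iff.mpr fun s t h =>
      ⟨by simpa using congr($h (E 0)), by simpa using congr($h (E 1))⟩
  refine ⟨?_, fun φ hφ => hφ (contactCandidate_one_eq_zero hbr φ)⟩
  rw [lieIndex_eq_finrank_sub_two hbr hindep, finrank_eq_card_basis E, Fintype.card_fin]

end ContactSeaweeds
end
end

section
/- Let g = p_n^A(a_1|…|a_m \ b_1|…|b_t) be a type-A seaweed with n > 2 whose meander M(g) consists of exactly one cycle (M(g) is connected and every vertex lies on exactly one top edge and exactly one bottom edge). Then at least one of a_1, a_m, b_1, b_t is greater than or equal to 4. -/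
open scoped TensorProduct

noncomputable section

namespace ContactSeaweeds

attribute [local instance 100] LieRing.ofAssociativeRing

/-!
Inside the first block of `a` the top edges pair `vᵢ` with its mirror image `v_{a₁+1-i}`.
So `a₁ = 1` leaves `v₁` without a top edge and `a₁ = 3` leaves the middle vertex `v₂`
without one; the same holds for `b₁`. If `a₁ = b₁ = 2`, then `{v₁, v₂}` is a whole
component of the meander, which contradicts connectedness as soon as `n > 2`.
(In the code, vertices are 0-based.)
-/

lemma IsComposition.exists_cons {n : ℕ} {c : List ℕ} (hc : IsComposition n c) (hn : 0 < n) :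
    ∃ x t, c = x :: t ∧ 0 < x := by
  obtain ⟨hpos, hsum⟩ := hc
  cases c with
  | nil => simp only [List.sum_nil] at hsum; omega
  | cons x t => exact ⟨x, t, rfl, hpos x List.mem_cons_self⟩

lemma topEdge_cons_of_lt {x v w : ℕ} {t : List ℕ} (hv : v < x)
    (h : TopEdge (x :: t) v w ∨ TopEdge (x :: t) w v) : v + w + 1 = x ∧ v ≠ w := by
  rcases h with ⟨k, r, hr, rfl, rfl⟩ | ⟨k, r, hr, rfl, rfl⟩ <;> cases k with
  | zero =>
    simp only [List.getD_cons_zero, List.take_zero, List.sum_nil, zero_add] at hr hv ⊢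
    omega
  | succ k =>
    simp only [List.take_succ_cons, List.sum_cons] at hv
    omega

lemma head_eq_two_or_four_le {x : ℕ} {t : List ℕ} (hx : 0 < x)
    (h₀ : OneTop (x :: t) 0) (h₁ : OneTop (x :: t) 1) : x = 2 ∨ 4 ≤ x := by
  obtain ⟨w₀, hw₀, -⟩ := h₀
  have hx₂ := topEdge_cons_of_lt hx hw₀
  obtain ⟨w₁, hw₁, -⟩ := h₁
  have hx₃ : x ≠ 3 := by
    rintro rfl
    have := topEdge_cons_of_lt (by norm_num) hw₁
    omega
  omega

lemma _root_.SimpleGraph.Reachable.of_adj_imp {V : Type*} {G : SimpleGraph V} {p : V → Prop}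
    (hp : ∀ u v, G.Adj u v → p u → p v) {u v : V} (h : G.Reachable u v) (hu : p u) : p v := by
  rw [SimpleGraph.reachable_iff_reflTransGen] at h
  induction h with
  | refl => exact hu
  | tail _ hadj ih => exact hp _ _ hadj ih

lemma meander_reachable_lt_two {n : ℕ} {s t : List ℕ} {u v : Fin n}
    (h : (meander n (2 :: s) (2 :: t)).Reachable u v) (hu : u.val < 2) : v.val < 2 :=
  h.of_adj_imp (p := fun w : Fin n => w.val < 2) (fun w w' hadj hw => by
    rcases or_assoc.mpr hadj.2 with htop | hbot
    · have := (topEdge_cons_of_lt hw htop).1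
      omega
    · have := (topEdge_cons_of_lt (t := t) hw hbot).1
      omega) hu

/-- If `n > 2` and the meander of a type-A seaweed is exactly one cycle,
then one of the extreme parts `a₁, aₘ, b₁, b_t` is at least `4`. -/
theorem extreme_part_ge_four_of_single_cycle (n : ℕ) (hn : 2 < n) (a b : List ℕ)
    (ha : IsComposition n a) (hb : IsComposition n b)
    (hconn : (meander n a b).Connected)
    (hdeg : ∀ v : Fin n, OneTop a v.val ∧ OneBottom b v.val) :
    4 ≤ a.headI ∨ 4 ≤ a.getLastD 0 ∨ 4 ≤ b.headI ∨ 4 ≤ b.getLastD 0 := by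
  obtain ⟨x, s, rfl, hx⟩ := ha.exists_cons (by omega)
  obtain ⟨y, t, rfl, hy⟩ := hb.exists_cons (by omega)
  have h₀ := hdeg ⟨0, by omega⟩
  have h₁ := hdeg ⟨1, by omega⟩
  rcases head_eq_two_or_four_le hx h₀.1 h₁.1 with rfl | hx₄
  · rcases head_eq_two_or_four_le hy h₀.2 h₁.2 with rfl | hy₄
    · have := meander_reachable_lt_two (hconn.preconnected ⟨0, by omega⟩ ⟨2, hn⟩) (by simp)
      simp at this
    · exact Or.inr (Or.inr (Or.inl hy₄))
  · exact Or.inl hx₄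

end ContactSeaweeds
end
end
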